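/- arXiv:math/0202047 — 3 statements merged into one kernel-verified Lean document; each statement's English description precedes it below -/
import Mathlib

section
/- For any nonzero integers p and q, the subgroup of BS(p,q) generated by x is infinite cyclic (the element x has infinite order). -/
/-- The Baumslag–Solitar group `BS(p,q) = ⟨x, t | t x^p t⁻¹ = x^q⟩`.
Generators: `false ↦ x`, `true ↦ t`. -/
def BaumslagSolitar (p q : ℤ) : Type :=
  PresentedGroup ({FreeGroup.of true * (FreeGroup.of false) ^ p * (FreeGroup.of true)⁻¹ *
    ((FreeGroup.of false) ^ q)⁻¹} : Set (FreeGroup Bool))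

instance (p q : ℤ) : Group (BaumslagSolitar p q) :=
  inferInstanceAs (Group (PresentedGroup _))

/-- The generator `x` of `BS(p,q)`. -/
def BaumslagSolitar.x (p q : ℤ) : BaumslagSolitar p q := PresentedGroup.of false

/-!
`BS(p,q)` acts on `ℚ` by affine maps: `x` as the translation `a ↦ a + 1` and `t` as the
dilation `a ↦ (q/p) a`. Conjugating the translation by `p` with this dilation gives the
translation by `q`, so the defining relation holds. The image of `x` is a translation by a
nonzero element of a torsion-free group, hence of infinite order, and so is `x`.
-/

theorem Equiv.not_isOfFinOrder_addLeft {A : Type*} [AddGroup A] [IsAddTorsionFree A] {a : A}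
    (ha : a ≠ 0) : ¬ IsOfFinOrder (Equiv.addLeft a) := by
  rintro ⟨n, hn, hpow⟩
  have hna : n • a = 0 := by
    simpa [Equiv.nsmul_addLeft] using congr($hpow.eq 0)
  exact not_isOfFinAddOrder_of_isAddTorsionFree ha
    (isOfFinAddOrder_iff_nsmul_eq_zero.2 ⟨n, hn, hna⟩)

namespace BaumslagSolitar

variable {p q : ℤ}

def toAffinePerm (K : Type*) [Field K] (hp : (p : K) ≠ 0) (hq : (q : K) ≠ 0) :
    BaumslagSolitar p q →* Equiv.Perm K :=
  PresentedGroup.toGroup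
    (f := fun b => if b then Equiv.mulLeft₀ ((q : K) / p) (div_ne_zero hq hp) else Equiv.addLeft 1)
    (by
      rintro r rfl
      simp only [map_mul, map_inv, map_zpow, FreeGroup.lift_apply_of, if_true, Bool.false_eq_true,
        if_false, Equiv.zsmul_addLeft]
      rw [mul_inv_eq_one, mul_inv_eq_iff_eq_mul]
      ext a
      simp [mul_add, div_mul_cancel₀ _ hp])

theorem toAffinePerm_x (K : Type*) [Field K] (hp : (p : K) ≠ 0) (hq : (q : K) ≠ 0) :
    toAffinePerm K hp hq (x p q) = Equiv.addLeft 1 :=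
  PresentedGroup.toGroup.of _

theorem not_isOfFinOrder_x (hp : p ≠ 0) (hq : q ≠ 0) : ¬ IsOfFinOrder (x p q) := by
  intro hx
  have hp' : (p : ℚ) ≠ 0 := Int.cast_ne_zero.2 hp
  have hq' : (q : ℚ) ≠ 0 := Int.cast_ne_zero.2 hq
  have himage := (toAffinePerm ℚ hp' hq').isOfFinOrder hx
  rw [toAffinePerm_x] at himage
  exact Equiv.not_isOfFinOrder_addLeft one_ne_zero himage

end BaumslagSolitar

/-- For nonzero `p, q`, the element `x` has infinite order, i.e. the subgroup it
generates is infinite cyclic. -/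
theorem baumslagSolitar_x_infinite_order (p q : ℤ) (hp : p ≠ 0) (hq : q ≠ 0) :
    ¬ IsOfFinOrder (BaumslagSolitar.x p q) ∧
    (Subgroup.zpowers (BaumslagSolitar.x p q) : Set (BaumslagSolitar p q)).Infinite := by
  have hx := BaumslagSolitar.not_isOfFinOrder_x hp hq
  exact ⟨hx, infinite_zpowers.2 hx⟩
end

section
/- If a topological group G has a metrically proper affine isometric action on a Hilbert space H, then the function g ↦ exp(−‖g·0‖²) is a positive definite function on G vanishing at infinity (i.e., a C₀ positive definite function). -/
/-!
Writing `vᵢ = gᵢ·0`, the cocycle identity `‖gᵢ⁻¹gⱼ·0‖ = ‖vᵢ - vⱼ‖` turns the kernel into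
`exp(-‖vᵢ - vⱼ‖²) = exp(-‖vᵢ‖²) exp(-‖vⱼ‖²) exp(2⟪vᵢ, vⱼ⟫)`: the Hadamard product of a rank-one
positive semidefinite matrix with the entrywise exponential of a Gram matrix. The latter is positive
semidefinite because every term of the exponential series is a Hadamard power of a Gram matrix
(Schur product theorem). Vanishing at infinity is properness composed with `exp(-t²) → 0`.
-/

open Filter

namespace Matrix

variable {ι : Type*}

open scoped ComplexOrder in
theorem PosSemidef.map_pow {𝕜 : Type*} [RCLike 𝕜] [Finite ι] {A : Matrix ι ι 𝕜}
    (hA : A.PosSemidef) (k : ℕ) : (A.map (· ^ k)).PosSemidef := by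
  induction k with
  | zero =>
    convert posSemidef_vecMulVec_self_star (1 : ι → 𝕜) using 1
    ext; simp [vecMulVec_apply]
  | succ k ih =>
    convert ih.hadamard hA using 1
    ext; simp [pow_succ]

variable [Fintype ι]

open Nat in
theorem PosSemidef.map_exp {A : Matrix ι ι ℝ} (hA : A.PosSemidef) :
    (A.map Real.exp).PosSemidef := by
  refine .of_dotProduct_mulVec_nonneg ?_ fun x => ?_
  · ext i j; simp [← hA.isHermitian.apply i j]
  have hexp (t : ℝ) : HasSum (fun k : ℕ => t ^ k / k !) (Real.exp t) := by
    rw [Real.exp_eq_exp_ℝ]; exact NormedSpace.expSeries_div_hasSum_exp t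
  have hform : HasSum (fun k : ℕ => x ⬝ᵥ (A.map (· ^ k) *ᵥ x) / k !)
      (x ⬝ᵥ (A.map Real.exp *ᵥ x)) := by
    simp only [dotProduct, mulVec, map_apply, Finset.mul_sum, Finset.sum_div]
    refine hasSum_sum fun i _ => hasSum_sum fun j _ => ?_
    exact (((hexp (A i j)).mul_right (x j)).mul_left (x i)).congr_fun fun k => by ring
  simpa using hform.nonneg fun k =>
    div_nonneg ((hA.map_pow k).dotProduct_mulVec_nonneg x) (by positivity)

theorem PosSemidef.sum_sum_mul_mul_nonneg {A : Matrix ι ι ℝ} (hA : A.PosSemidef) (c : ι → ℝ) :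
    0 ≤ ∑ i, ∑ j, c i * c j * A i j := by
  have hquad := hA.dotProduct_mulVec_nonneg c
  simp only [dotProduct, mulVec, star_trivial, Finset.mul_sum] at hquad
  exact hquad.trans_eq (Finset.sum_congr rfl fun i _ => Finset.sum_congr rfl fun j _ => by ring)

theorem posSemidef_exp_neg_norm_sub_sq {E : Type*} [NormedAddCommGroup E]
    [InnerProductSpace ℝ E] (v : ι → E) :
    (of fun i j => Real.exp (-‖v i - v j‖ ^ 2)).PosSemidef := by
  let d i := Real.exp (-‖v i‖ ^ 2)
  have hfactor : (of fun i j => Real.exp (-‖v i - v j‖ ^ 2)) =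
      vecMulVec d (star d) ⊙ ((2 : ℝ) • gram ℝ v).map Real.exp := by
    ext i j
    simp only [d, of_apply, hadamard_apply, vecMulVec_apply, map_apply, smul_apply, gram_apply,
      smul_eq_mul, star_trivial, norm_sub_sq_real, ← Real.exp_add]
    ring_nf
  rw [hfactor]
  exact (posSemidef_vecMulVec_self_star d).hadamard ((posSemidef_gram ℝ v).smul zero_le_two).map_exp

end Matrix

theorem AffineIsometryEquiv.dist_inv_mul_apply {G 𝕜 V P : Type*} [Group G] [NormedField 𝕜]
    [SeminormedAddCommGroup V] [NormedSpace 𝕜 V] [PseudoMetricSpace P] [NormedAddTorsor V P]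
    (ρ : G →* (P ≃ᵃⁱ[𝕜] P)) (g h : G) (x : P) :
    dist (ρ (g⁻¹ * h) x) x = dist (ρ h x) (ρ g x) := by
  rw [← (ρ g).dist_map, ← Function.comp_apply (f := ρ g), ← AffineIsometryEquiv.coe_mul,
    ← map_mul, mul_inv_cancel_left]

theorem exp_neg_norm_sq_cocycle_positive_definite_C0_general
    (G : Type*) [Group G] [TopologicalSpace G]
    (H : Type*) [NormedAddCommGroup H] [InnerProductSpace ℝ H]
    (ρ : G →* (H ≃ᵃⁱ[ℝ] H))
    (hproper : Tendsto (fun g : G => ‖ρ g 0‖) (cocompact G) atTop) :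
    (∀ (n : ℕ) (g : Fin n → G) (c : Fin n → ℝ),
      0 ≤ ∑ i, ∑ j, c i * c j * Real.exp (-‖ρ ((g i)⁻¹ * g j) 0‖ ^ 2)) ∧
    Tendsto (fun g : G => Real.exp (-‖ρ g 0‖ ^ 2)) (cocompact G) (nhds 0) := by
  refine ⟨fun n g c => ?_, ?_⟩
  · have hcocycle (i j : Fin n) : ‖ρ ((g i)⁻¹ * g j) 0‖ = ‖ρ (g i) 0 - ρ (g j) 0‖ := by
      rw [← dist_zero_right, AffineIsometryEquiv.dist_inv_mul_apply, dist_comm, dist_eq_norm]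
    simpa only [hcocycle, Matrix.of_apply] using
      (Matrix.posSemidef_exp_neg_norm_sub_sq fun i => ρ (g i) 0).sum_sum_mul_mul_nonneg c
  · exact Real.tendsto_exp_neg_atTop_nhds_zero.comp ((tendsto_pow_atTop two_ne_zero).comp hproper)

/-- If a topological group `G` has a metrically proper affine isometric action on a real
Hilbert space `H` (i.e. `g ↦ ‖g·0‖` is a proper function on `G`), then
`g ↦ exp(−‖g·0‖²)` is a positive definite function on `G` vanishing at infinity. -/
theorem exp_neg_norm_sq_cocycle_positive_definite_C0
    (G : Type*) [Group G] [TopologicalSpace G]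
    (H : Type*) [NormedAddCommGroup H] [InnerProductSpace ℝ H] [CompleteSpace H]
    (ρ : G →* (H ≃ᵃⁱ[ℝ] H))
    (hproper : Tendsto (fun g : G => ‖ρ g 0‖) (cocompact G) atTop) :
    (∀ (n : ℕ) (g : Fin n → G) (c : Fin n → ℝ),
      0 ≤ ∑ i, ∑ j, c i * c j * Real.exp (-‖ρ ((g i)⁻¹ * g j) 0‖ ^ 2)) ∧
    Tendsto (fun g : G => Real.exp (-‖ρ g 0‖ ^ 2)) (cocompact G) (nhds 0) :=
  exp_neg_norm_sq_cocycle_positive_definite_C0_general G H ρ hproper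
end

section
/- Let G be a topological group acting continuously and transitively on a discrete space X, with open stabilizer K = Stab(v). If a subgroup Γ ≤ G acts transitively on X and Γ ∩ K is closed in G, then Γ is closed in G. -/
/-!
A subgroup `H` meeting an open subgroup `K` in a closed set is closed: if `g ∉ H` and the
coset `gK` meets `H` in some `h`, then `gK = hK`, and `hK ∖ h(H ∩ K)` is an open neighbourhood
of `g` missing `H`; otherwise `gK` itself is one. The stabilizer of a point of a discrete
space is such a `K`.
-/

open Pointwise Set

theorem Subgroup.isClosed_of_isOpen_of_isClosed_inf {G : Type*} [Group G] [TopologicalSpace G]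
    [SeparatelyContinuousMul G] (H K : Subgroup G) (hK : IsOpen (K : Set G))
    (hHK : IsClosed ((H ⊓ K : Subgroup G) : Set G)) : IsClosed (H : Set G) := by
  rw [← isOpen_compl_iff, isOpen_iff_forall_mem_open]
  intro g hg
  by_cases hmeet : ∃ h ∈ H, g⁻¹ * h ∈ K
  · obtain ⟨h, hH, hgh⟩ := hmeet
    refine ⟨h • ((K : Set G) \ (H ⊓ K : Subgroup G)), ?_, (hK.sdiff hHK).smul h, ?_⟩
    · intro x hx hxH
      rw [mem_smul_set_iff_inv_smul_mem] at hx
      exact hx.2 ⟨H.mul_mem (H.inv_mem hH) hxH, hx.1⟩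
    · rw [mem_smul_set_iff_inv_smul_mem, smul_eq_mul]
      refine ⟨by simpa using K.inv_mem hgh, fun hgH ↦ hg ?_⟩
      simpa using H.mul_mem hH hgH.1
  · push Not at hmeet
    refine ⟨g • (K : Set G), fun x hx hxH ↦ hmeet x hxH ?_, hK.smul g, ?_⟩
    · simpa [mem_smul_set_iff_inv_smul_mem] using hx
    · simp [mem_smul_set_iff_inv_smul_mem]

theorem subgroup_closed_of_transitive_discrete_general
    (G : Type*) [Group G] [TopologicalSpace G] [IsTopologicalGroup G]
    (X : Type*) [TopologicalSpace X] [DiscreteTopology X] [MulAction G X]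
    [ContinuousSMul G X] (v : X)
    (Γ : Subgroup G)
    (hclosed : IsClosed ((Γ ⊓ MulAction.stabilizer G v : Subgroup G) : Set G)) :
    IsClosed (Γ : Set G) :=
  Γ.isClosed_of_isOpen_of_isClosed_inf _ (stabilizer_isOpen G v) hclosed

/-- Let `G` be a topological group acting continuously and transitively on a discrete
space `X`, with open stabilizer `K = Stab(v)` (openness of `K` is equivalent to the
continuity of the orbit map `g ↦ g • v` into the discrete space `X`). If a subgroup
`Γ ≤ G` acts transitively on `X` and `Γ ∩ K` is closed in `G`, then `Γ` is closed
in `G`. -/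
theorem subgroup_closed_of_transitive_discrete
    (G : Type*) [Group G] [TopologicalSpace G] [IsTopologicalGroup G]
    (X : Type*) [TopologicalSpace X] [DiscreteTopology X] [MulAction G X]
    [ContinuousSMul G X] (v : X)
    (htransG : ∀ x : X, ∃ g : G, g • v = x)
    (Γ : Subgroup G)
    (htrans : ∀ x : X, ∃ γ ∈ Γ, γ • v = x)
    (hclosed : IsClosed ((Γ ⊓ MulAction.stabilizer G v : Subgroup G) : Set G)) :
    IsClosed (Γ : Set G) :=
  subgroup_closed_of_transitive_discrete_general G X v Γ hclosed
end
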